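/- Let ℓ ∈ ℕ₀, 1 ≤ i ≤ ℓ and 1 ≤ k ≤ 2^ℓ. Then there is exactly one j* ∈ {1, …, 2^{i-1}} with Δ^{(i,j*)}_{k,ℓ} ≠ 0, namely j* = ⌈k·2^{i-1-ℓ}⌉; moreover (Δ^{(i,j*)}_{k,ℓ})² = 2^{i-1} · 2^{-2ℓ}, and Δ^{(i,j)}_{k,ℓ} = 0 for all j ≠ j*. In addition Δ^{(0,1)}_{k,ℓ} = 2^{-ℓ}. -/

import Mathlib

open MeasureTheory

/-- The Haar functions on `[0,1]`: `haar 0 j = 1` (only `j = 1` is used), and for `i ≥ 1`,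
`haar i j = 2^((i-1)/2) * (1_{I^{(i,j)}} - 1_{J^{(i,j)}})`. -/
noncomputable def haar : ℕ → ℕ → ℝ → ℝ
  | 0, _, _ => 1
  | (i + 1), j, t =>
      2 ^ ((i : ℝ) / 2) *
        ((Set.Ico (((j : ℝ) - 1) / 2 ^ i) (((j : ℝ) - 1 / 2) / 2 ^ i)).indicator
            (fun _ => (1 : ℝ)) t
          - (Set.Ico (((j : ℝ) - 1 / 2) / 2 ^ i) ((j : ℝ) / 2 ^ i)).indicator
            (fun _ => (1 : ℝ)) t)

/-- The Schauder functions `s^{(i,j)}(t) = ∫_0^t h^{(i,j)}(u) du`. -/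
noncomputable def schauder (i j : ℕ) (t : ℝ) : ℝ := ∫ u in (0 : ℝ)..t, haar i j u

/-- The Schauder increments `Δ^{(i,j)}_{k,ℓ} = s^{(i,j)}(k/2^ℓ) - s^{(i,j)}((k-1)/2^ℓ)`. -/
noncomputable def schauderInc (i j k ℓ : ℕ) : ℝ :=
  schauder i j ((k : ℝ) / 2 ^ ℓ) - schauder i j (((k : ℝ) - 1) / 2 ^ ℓ)

/-!
The dyadic interval `[(k-1)/2^ℓ, k/2^ℓ)` with `ℓ ≥ i` lies inside a single dyadic interval of
level `i`, the one of index `r = ⌊(k-1)/2^(ℓ-i)⌋`, while the two halves `I^{(i,j)}`, `J^{(i,j)}` of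
the support of `h^{(i,j)}` are the level-`i` intervals of indices `2j-2` and `2j-1`. Hence
`h^{(i,j)}` is constant on `[(k-1)/2^ℓ, k/2^ℓ)`: it equals `(-1)^r 2^((i-1)/2)` for `j = ⌊r/2⌋ + 1`
and vanishes for every other `j`, and the increment is this constant times `2^(-ℓ)`.
-/

open Set

theorem intervalIntegral_eq_of_eqOn_Ico {E : Type*} [NormedAddCommGroup E] [NormedSpace ℝ E]
    [CompleteSpace E] {f : ℝ → E} {a b : ℝ} {c : E} (hab : a ≤ b) (h : EqOn f (fun _ => c) (Ico a b)) :
    ∫ x in a..b, f x = (b - a) • c := by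
  rw [intervalIntegral.integral_of_le hab, setIntegral_congr_set Ico_ae_eq_Ioc.symm,
    setIntegral_congr_fun measurableSet_Ico h, setIntegral_const, Real.volume_real_Ico_of_le hab]

theorem Nat.ceil_succ_div {K : Type*} [Field K] [LinearOrder K] [IsStrictOrderedRing K]
    [FloorSemiring K] {n b : ℕ} (hb : 0 < b) : ⌈((n + 1 : ℕ) : K) / b⌉₊ = n / b + 1 := by
  have hb' : (0 : K) < b := by exact_mod_cast hb
  rw [Nat.ceil_eq_iff (Nat.succ_ne_zero _), Nat.succ_sub_one, Nat.cast_succ, lt_div_iff₀ hb',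
    div_le_iff₀ hb']
  constructor
  · exact_mod_cast (Nat.div_mul_le_self n b).trans_lt n.lt_succ_self
  · exact_mod_cast (Nat.succ_mul (n / b) b ▸ Nat.lt_div_mul_add hb : n < (n / b).succ * b)

theorem mem_Ico_div_iff_floor_eq {K : Type*} [Field K] [LinearOrder K] [IsStrictOrderedRing K]
    [FloorRing K] {t N : K} (hN : 0 < N) {z : ℤ} :
    t ∈ Ico (z / N) ((z + 1) / N) ↔ ⌊t * N⌋ = z := by
  rw [Int.floor_eq_iff, mem_Ico, div_le_iff₀ hN, lt_div_iff₀ hN]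

theorem floor_mul_two_pow_of_mem_Ico {t : ℝ} {n p L : ℕ}
    (ht : t ∈ Ico ((n : ℝ) / 2 ^ (p + L)) ((n + 1) / 2 ^ (p + L))) :
    ⌊t * 2 ^ p⌋ = ((n / 2 ^ L : ℕ) : ℤ) := by
  have h : ⌊t * 2 ^ (p + L)⌋ = n :=
    (mem_Ico_div_iff_floor_eq (by positivity)).1 (by push_cast; exact ht)
  have hscale : t * 2 ^ p = t * 2 ^ (p + L) / ((2 ^ L : ℕ) : ℝ) := by
    push_cast; rw [pow_add]; field_simp
  rw [hscale, Int.floor_div_natCast, h]; push_cast; rfl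

theorem haar_succ_apply (m j : ℕ) (t : ℝ) :
    haar (m + 1) j t = 2 ^ ((m : ℝ) / 2) *
      ((if ⌊t * 2 ^ (m + 1)⌋ = 2 * (j : ℤ) - 2 then 1 else 0) -
        (if ⌊t * 2 ^ (m + 1)⌋ = 2 * (j : ℤ) - 1 then 1 else 0)) := by
  have hN : (0 : ℝ) < 2 ^ (m + 1) := by positivity
  have hI : Ico (((j : ℝ) - 1) / 2 ^ m) (((j : ℝ) - 1 / 2) / 2 ^ m) =
      Ico (((2 * j - 2 : ℤ) : ℝ) / 2 ^ (m + 1)) ((((2 * j - 2 : ℤ) : ℝ) + 1) / 2 ^ (m + 1)) := by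
    push_cast; rw [pow_succ]; congr 1 <;> field_simp; ring
  have hJ : Ico (((j : ℝ) - 1 / 2) / 2 ^ m) ((j : ℝ) / 2 ^ m) =
      Ico (((2 * j - 1 : ℤ) : ℝ) / 2 ^ (m + 1)) ((((2 * j - 1 : ℤ) : ℝ) + 1) / 2 ^ (m + 1)) := by
    push_cast; rw [pow_succ]; congr 1 <;> field_simp; ring
  simp only [haar, hI, hJ, indicator_apply, mem_Ico_div_iff_floor_eq hN]

theorem haar_intervalIntegrable (i j : ℕ) (a b : ℝ) : IntervalIntegrable (haar i j) volume a b := by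
  cases i with
  | zero => exact intervalIntegrable_const
  | succ m =>
    have hind (c d : ℝ) : IntervalIntegrable ((Ico c d).indicator fun _ => (1 : ℝ)) volume a b :=
      ((integrable_indicator_iff measurableSet_Ico).2
        (integrableOn_const measure_Ico_lt_top.ne)).intervalIntegrable
    exact ((hind _ _).sub (hind _ _)).const_mul _

theorem schauderInc_eq_integral (i j k ℓ : ℕ) :
    schauderInc i j k ℓ = ∫ u in ((k : ℝ) - 1) / 2 ^ ℓ..(k : ℝ) / 2 ^ ℓ, haar i j u :=
  intervalIntegral.integral_interval_sub_left (haar_intervalIntegrable ..)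
    (haar_intervalIntegrable ..)

theorem schauderInc_zero (j k ℓ : ℕ) : schauderInc 0 j k ℓ = ((2 : ℝ) ^ ℓ)⁻¹ := by
  simp only [schauderInc_eq_integral, haar, intervalIntegral.integral_const, smul_eq_mul, mul_one]
  ring

theorem ite_sub_ite_eq_ite_neg_one_pow (r j : ℕ) :
    ((if r + 2 = 2 * j then 1 else 0) - (if r + 1 = 2 * j then 1 else 0) : ℝ) =
      if j = r / 2 + 1 then (-1) ^ r else 0 := by
  rcases Nat.even_or_odd' r with ⟨s, rfl | rfl⟩ <;> split_ifs <;>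
    first | omega | simp [pow_succ, pow_mul]

theorem schauderInc_succ (m j n L : ℕ) :
    schauderInc (m + 1) j (n + 1) (m + 1 + L) =
      if j = n / 2 ^ (L + 1) + 1 then (-1) ^ (n / 2 ^ L) * 2 ^ ((m : ℝ) / 2) / 2 ^ (m + 1 + L)
      else 0 := by
  have hfloor (t : ℝ) (ht : t ∈ Ico ((n : ℝ) / 2 ^ (m + 1 + L)) ((n + 1) / 2 ^ (m + 1 + L))) :
      haar (m + 1) j t = 2 ^ ((m : ℝ) / 2) *
        ((if n / 2 ^ L + 2 = 2 * j then 1 else 0) - (if n / 2 ^ L + 1 = 2 * j then 1 else 0)) := by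
    simp only [haar_succ_apply, floor_mul_two_pow_of_mem_Ico ht]
    congr 3 <;> simp only [eq_iff_iff] <;> omega
  rw [schauderInc_eq_integral, Nat.cast_succ, add_sub_cancel_right,
    intervalIntegral_eq_of_eqOn_Ico (by gcongr; linarith) hfloor, ite_sub_ite_eq_ite_neg_one_pow,
    Nat.div_div_eq_div_mul, ← pow_succ]
  split_ifs
  · rw [smul_eq_mul]; ring
  · rw [mul_zero, smul_zero]

/-- For `1 ≤ i ≤ ℓ` there is exactly one `j* = ⌈k·2^{i-1-ℓ}⌉` with a nonzero Schauder
increment, its square equals `2^{i-1}·2^{-2ℓ}`, and `Δ^{(0,1)}_{k,ℓ} = 2^{-ℓ}`. -/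
theorem schauderInc_support (ℓ i k : ℕ) (hi1 : 1 ≤ i) (hi2 : i ≤ ℓ)
    (hk1 : 1 ≤ k) (hk2 : k ≤ 2 ^ ℓ) :
    ∃ jstar : ℕ, jstar = ⌈(k : ℝ) * 2 ^ (i - 1) / 2 ^ ℓ⌉₊ ∧
      1 ≤ jstar ∧ jstar ≤ 2 ^ (i - 1) ∧
      schauderInc i jstar k ℓ ≠ 0 ∧
      schauderInc i jstar k ℓ ^ 2 = 2 ^ (i - 1) * ((2 : ℝ) ^ (2 * ℓ))⁻¹ ∧
      (∀ j : ℕ, 1 ≤ j → j ≤ 2 ^ (i - 1) → j ≠ jstar → schauderInc i j k ℓ = 0) ∧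
      schauderInc 0 1 k ℓ = ((2 : ℝ) ^ ℓ)⁻¹ := by
  obtain ⟨m, rfl⟩ : ∃ m, i = m + 1 := ⟨i - 1, by omega⟩
  obtain ⟨L, rfl⟩ : ∃ L, ℓ = m + 1 + L := ⟨ℓ - (m + 1), by omega⟩
  obtain ⟨n, rfl⟩ : ∃ n, k = n + 1 := ⟨k - 1, by omega⟩
  rw [Nat.add_sub_cancel]
  have hceil : ⌈((n + 1 : ℕ) : ℝ) * 2 ^ m / 2 ^ (m + 1 + L)⌉₊ = n / 2 ^ (L + 1) + 1 := by
    rw [← Nat.ceil_succ_div (K := ℝ) (by positivity)]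
    congr 1
    push_cast
    rw [show m + 1 + L = m + (L + 1) by ring, pow_add]
    field_simp
  have hle : n / 2 ^ (L + 1) + 1 ≤ 2 ^ m := by
    rw [Nat.add_one_le_iff, Nat.div_lt_iff_lt_mul (by positivity), ← pow_add,
      show m + (L + 1) = m + 1 + L by ring]
    omega
  have hsq (r : ℕ) : ((-1 : ℝ) ^ r * 2 ^ ((m : ℝ) / 2) / 2 ^ (m + 1 + L)) ^ 2 =
      2 ^ m * ((2 : ℝ) ^ (2 * (m + 1 + L)))⁻¹ := by
    rw [div_pow, mul_pow, ← pow_mul, mul_comm r, pow_mul, neg_one_sq, one_pow, one_mul,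
      ← Real.rpow_mul_natCast zero_le_two, ← pow_mul, mul_comm (m + 1 + L), div_eq_mul_inv]
    norm_num
  refine ⟨_, hceil.symm, le_add_self, hle, ?_, ?_, fun j _ _ hj => ?_, schauderInc_zero ..⟩
  · rw [schauderInc_succ, if_pos rfl]
    positivity
  · rw [schauderInc_succ, if_pos rfl, hsq]
  · rw [schauderInc_succ, if_neg hj]
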